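/- Let B̂(γ) = ∏_{t=0}^T ( {S̲_t}·1_{{Δγ_t<0}} + {S̄_t}·1_{{Δγ_t>0}} + [S̲_t, S̄_t]·1_{{Δγ_t=0}} ), i.e. B̂(γ) consists of those S ∈ [S̲, S̄] with S_t = S̲_t a.s. on {Δγ_t < 0} and S_t = S̄_t a.s. on {Δγ_t > 0} for all t, and let B = {(S, γ) ∈ [S̲, S̄] × Y : S ∈ B̂(γ)} be its graph. Then B is closed in [S̲, S̄] × Y with respect to the product of the topology τ^w on [S̲, S̄] and the topology τ of convergence in probability on Y; equivalently, every (S, γ) in the closure of B satisfies S_t·1_{{Δγ_t ≠ 0}} = S̲_t·1_{{Δγ_t < 0}} + S̄_t·1_{{Δγ_t > 0}} for t = 0,…,T. -/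

import Mathlib

open MeasureTheory Filter Set Topology
open scoped ENNReal

noncomputable section

namespace Shadow

variable {Ω : Type*}

/-- strategy extended by the conventions `γ₋₁ = 0`, `γ_t = 0` for `t ≥ T`. -/
def extStrat (T : ℕ) (γ : ℕ → Ω → ℝ) : ℤ → Ω → ℝ := fun t =>
  if 0 ≤ t ∧ t < (T : ℤ) then γ t.toNat else 0

/-- `Δγ_t = γ_t − γ_{t−1}` with the conventions `γ₋₁ = 0`, `γ_T = 0`. -/
def dGamma (T : ℕ) (γ : ℕ → Ω → ℝ) (t : ℕ) (ω : Ω) : ℝ :=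
  extStrat T γ (t : ℤ) ω - extStrat T γ ((t : ℤ) - 1) ω

/-- terminal wealth `X_T(γ)` under transaction costs. -/
def XT (T : ℕ) (Sl Su : ℕ → Ω → ℝ) (γ : ℕ → Ω → ℝ) (ω : Ω) : ℝ :=
  1 + ∑ t ∈ Finset.range (T + 1),
      (Sl t ω * max (-dGamma T γ t ω) 0 - Su t ω * max (dGamma T γ t ω) 0)

/-- frictionless terminal wealth `1 + (γ ∘ S)_T`. -/
def FW (T : ℕ) (S : ℕ → Ω → ℝ) (γ : ℕ → Ω → ℝ) (ω : Ω) : ℝ :=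
  1 + ∑ t ∈ Finset.range T, γ t ω * (S (t + 1) ω - S t ω)

/-- the lower semicontinuous envelope of `f` on `𝒳` with respect to the topology `τ`:
the largest function which is lsc on `𝒳` and majorized by `f` on `𝒳`. -/
def lscEnvOn {α : Type*} (τ : TopologicalSpace α) (𝒳 : Set α) (f : α → EReal) : α → EReal :=
  fun x => ⨆ g ∈ {g : α → EReal |
      @LowerSemicontinuousOn α EReal τ _ g 𝒳 ∧ ∀ y ∈ 𝒳, g y ≤ f y}, g x

variable [MeasurableSpace Ω]

/-- the weak topology `σ(L^q, L^p)`, pulled back to functions: the coarsest topology making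
all pairings with `L^p` test functions continuous. -/
def weakTop (P : Measure Ω) (p : ℝ≥0∞) : TopologicalSpace (Ω → ℝ) :=
  ⨅ g ∈ {g : Ω → ℝ | MemLp g p P},
    TopologicalSpace.induced (fun S : Ω → ℝ => ∫ ω, S ω * g ω ∂P) inferInstance

/-- product of weak topologies over time, on price processes. -/
def weakTopProc (P : Measure Ω) (p : ℝ≥0∞) : TopologicalSpace (ℕ → Ω → ℝ) :=
  ⨅ t : ℕ, TopologicalSpace.induced (fun S : ℕ → Ω → ℝ => S t) (weakTop P p)

/-- the metric of convergence in probability. -/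
def rhoDist (P : Measure Ω) (f g : Ω → ℝ) : ℝ :=
  ∫ ω, |f ω - g ω| / (1 + |f ω - g ω|) ∂P

/-- topology of convergence in probability. -/
def probTop (P : Measure Ω) : TopologicalSpace (Ω → ℝ) :=
  TopologicalSpace.generateFrom
    {s | ∃ f : Ω → ℝ, ∃ ε : ℝ, 0 < ε ∧ s = {h | rhoDist P f h < ε}}

/-- the product over time of the topologies of convergence in probability. -/
def probTopProc (P : Measure Ω) : TopologicalSpace (ℕ → Ω → ℝ) :=
  ⨅ t : ℕ, TopologicalSpace.induced (fun γ : ℕ → Ω → ℝ => γ t) (probTop P)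

/-- the bid–ask interval `[S̲, S̄]` of adapted price processes. -/
def priceInterval (F : ℕ → MeasurableSpace Ω) (P : Measure Ω) (Sl Su : ℕ → Ω → ℝ) :
    Set (ℕ → Ω → ℝ) :=
  {S | ∀ t, Measurable[F t] (S t) ∧ ∀ᵐ ω ∂P, Sl t ω ≤ S t ω ∧ S t ω ≤ Su t ω}

/-- `Ψ(S, γ) = Φ(1 + (γ∘S)_T)`. -/
def Psi (T : ℕ) (Φ : (Ω → ℝ) → EReal) (S γ : ℕ → Ω → ℝ) : EReal := Φ (FW T S γ)

/-- `Ψ̂(·, γ)`: the `τ^w`-lower semicontinuous envelope of `Ψ(·, γ)` on `[S̲, S̄]`. -/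
def PsiHat (P : Measure Ω) (p : ℝ≥0∞) (F : ℕ → MeasurableSpace Ω)
    (Sl Su : ℕ → Ω → ℝ) (T : ℕ) (Φ : (Ω → ℝ) → EReal) (γ : ℕ → Ω → ℝ) :
    (ℕ → Ω → ℝ) → EReal :=
  lscEnvOn (weakTopProc P p) (priceInterval F P Sl Su) (fun S => Psi T Φ S γ)

end Shadow
open Shadow MeasureTheory
open scoped ENNReal

/-! Fix `t ≤ T` and `δ > 0`, and let `(S', γ')` range over the graph near `(S, γ)`. Closeness
in `τ` makes `Δγ'_t` close to `Δγ_t` in probability, so on `{Δγ_t ≤ -δ}` the constraint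
`S'_t = S̲_t` holds outside a set of small measure, while closeness in `τ^w`, tested against
indicators, makes `∫_A S'_t` close to `∫_A S_t`. Since `|S'_t - S̲_t| ≤ S̄_t - S̲_t` and the
integral of `S̄_t - S̲_t` over small sets is small, `∫_A S_t = ∫_A S̲_t` for every measurable
`A ⊆ {Δγ_t ≤ -δ}`, so `S_t = S̲_t` a.e. there; let `δ → 0`. The ask side is symmetric. -/

theorem ae_imp_of_forall_pos {Ω : Type*} [MeasurableSpace Ω] {μ : Measure Ω} {x : Ω → ℝ}
    {q : Ω → Prop} (h : ∀ δ > 0, ∀ᵐ ω ∂μ, δ ≤ x ω → q ω) : ∀ᵐ ω ∂μ, 0 < x ω → q ω := by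
  filter_upwards [ae_all_iff.2 fun n : ℕ => h (1 / (n + 1)) Nat.one_div_pos_of_nat]
    with ω hω hx
  obtain ⟨n, hn⟩ := exists_nat_one_div_lt hx
  exact hω n hn.le

section ApproximateIntegrals

variable {Ω : Type*} [MeasurableSpace Ω] {P : Measure Ω} [IsFiniteMeasure P]

theorem MeasureTheory.Integrable.exists_pos_setIntegral_lt {h : Ω → ℝ} (hh : Integrable h P)
    {ε : ℝ} (hε : 0 < ε) : ∃ κ > 0, ∀ E, P.real E < κ → ∫ ω in E, h ω ∂P < ε := by
  obtain ⟨δ, hδ, hlt⟩ :=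
    exists_pos_setLIntegral_lt_of_measure_lt hh.2.ne (ENNReal.ofReal_pos.2 hε).ne'
  obtain ⟨κ, -, hκ, hκδ⟩ := ENNReal.lt_iff_exists_real_btwn.1 hδ
  refine ⟨κ, ENNReal.ofReal_pos.1 hκ, fun E hE => ?_⟩
  have hPE : P E < δ := by
    rw [← ofReal_measureReal]
    exact ((ENNReal.ofReal_lt_ofReal_iff (ENNReal.ofReal_pos.1 hκ)).2 hE).trans hκδ
  have hnorm : ENNReal.ofReal ‖∫ ω in E, h ω ∂P‖ < ENNReal.ofReal ε := by
    rw [ofReal_norm]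
    exact (enorm_integral_le_lintegral_enorm _).trans_lt (hlt E hPE)
  exact (Real.le_norm_self _).trans_lt ((ENNReal.ofReal_lt_ofReal_iff hε).1 hnorm)

theorem setIntegral_eq_of_forall_approx {f g h : Ω → ℝ} {A : Set Ω} (hA : MeasurableSet A)
    (hh : Integrable h P)
    (happrox : ∀ ε > 0, ∀ κ > 0, ∃ f' E, MeasurableSet E ∧ P.real E < κ ∧ Integrable f' P ∧
      (∀ᵐ ω ∂P, |f' ω - g ω| ≤ h ω) ∧ (∀ᵐ ω ∂P, ω ∈ A → ω ∉ E → f' ω = g ω) ∧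
      |∫ ω in A, f' ω ∂P - ∫ ω in A, f ω ∂P| < ε) (hg : Integrable g P) :
    ∫ ω in A, f ω ∂P = ∫ ω in A, g ω ∂P := by
  refine eq_of_forall_dist_le fun ε hε => ?_
  obtain ⟨κ, hκ, hsmall⟩ := hh.exists_pos_setIntegral_lt (half_pos hε)
  obtain ⟨f', E, hE, hEκ, hf', hdom, hoff, hclose⟩ := happrox _ (half_pos hε) κ hκ
  have hgap : ∫ ω in A, |f' ω - g ω| ∂P ≤ ∫ ω in E ∩ A, h ω ∂P := by
    calc ∫ ω in A, |f' ω - g ω| ∂P = ∫ ω in A, E.indicator (fun ω => |f' ω - g ω|) ω ∂P := by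
          refine setIntegral_congr_ae hA (hoff.mono fun ω hω hωA => ?_)
          by_cases hωE : ω ∈ E
          · rw [indicator_of_mem hωE]
          · rw [indicator_of_notMem hωE, hω hωA hωE, sub_self, abs_zero]
      _ = ∫ ω in E ∩ A, |f' ω - g ω| ∂P := by
          rw [integral_indicator hE, Measure.restrict_restrict hE]
      _ ≤ ∫ ω in E ∩ A, h ω ∂P :=
          setIntegral_mono_ae (hf'.sub hg).abs.integrableOn hh.integrableOn hdom
  have hEA : P.real (E ∩ A) < κ := (measureReal_mono inter_subset_left).trans_lt hEκ
  calc dist (∫ ω in A, f ω ∂P) (∫ ω in A, g ω ∂P)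
      ≤ |∫ ω in A, f' ω ∂P - ∫ ω in A, f ω ∂P| + |∫ ω in A, (f' ω - g ω) ∂P| := by
        rw [Real.dist_eq, integral_sub hf'.integrableOn hg.integrableOn]
        exact (abs_sub_le _ _ _).trans_eq (by rw [abs_sub_comm])
    _ ≤ ε / 2 + ε / 2 :=
        add_le_add hclose.le ((abs_integral_le_integral_abs).trans
          (hgap.trans (hsmall _ hEA).le))
    _ = ε := add_halves ε

theorem ae_eq_of_pos_of_forall_approx {x f g h : Ω → ℝ} (hx : Measurable x)
    (hf : Integrable f P) (hg : Integrable g P) (hh : Integrable h P)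
    (happrox : ∀ A, MeasurableSet A → ∀ ε > 0, ∀ δ > 0, ∀ κ > 0, ∃ f' E, MeasurableSet E ∧
      P.real E < κ ∧ Integrable f' P ∧ (∀ᵐ ω ∂P, |f' ω - g ω| ≤ h ω) ∧
      (∀ᵐ ω ∂P, ω ∉ E → δ ≤ x ω → f' ω = g ω) ∧
      |∫ ω in A, f' ω ∂P - ∫ ω in A, f ω ∂P| < ε) :
    ∀ᵐ ω ∂P, 0 < x ω → f ω = g ω := by
  refine ae_imp_of_forall_pos fun δ hδ => ?_
  have hB : MeasurableSet {ω | δ ≤ x ω} := hx measurableSet_Ici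
  refine (ae_restrict_iff' hB).1 ?_
  refine hf.restrict.ae_eq_of_forall_setIntegral_eq _ _ hg.restrict fun s hs _ => ?_
  rw [Measure.restrict_restrict hs]
  refine setIntegral_eq_of_forall_approx (hs.inter hB) hh (fun ε hε κ hκ => ?_) hg
  obtain ⟨f', E, hE, hEκ, hf', hdom, hoff, hclose⟩ := happrox _ (hs.inter hB) ε hε δ hδ κ hκ
  exact ⟨f', E, hE, hEκ, hf', hdom, hoff.mono fun ω hω hωA hωE => hω hωE hωA.2, hclose⟩

end ApproximateIntegrals

namespace Shadow

variable {Ω : Type*} [MeasurableSpace Ω] {P : Measure Ω}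

theorem rhoDist_self (f : Ω → ℝ) : rhoDist P f f = 0 := by
  simp [rhoDist]

theorem continuous_integral_mul_weakTopProc {p : ℝ≥0∞} {g : Ω → ℝ} (hg : MemLp g p P) (t : ℕ) :
    Continuous[weakTopProc P p, _] fun S : ℕ → Ω → ℝ => ∫ ω, S t ω * g ω ∂P :=
  @Continuous.comp _ _ _ (weakTopProc P p) (weakTop P p) _ (fun S => S t)
    (fun S => ∫ ω, S ω * g ω ∂P)
    (continuous_iInf_dom (continuous_iInf_dom (i := hg) continuous_induced_dom))
    (continuous_iInf_dom continuous_induced_dom)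

theorem isOpen_rhoDist_lt (f : Ω → ℝ) {η : ℝ} (hη : 0 < η) (k : ℕ) :
    IsOpen[probTopProc P] {γ : ℕ → Ω → ℝ | rhoDist P f (γ k) < η} :=
  @Continuous.isOpen_preimage _ _ (probTopProc P) (probTop P) _
    (continuous_iInf_dom continuous_induced_dom) _
    (TopologicalSpace.isOpen_generateFrom_of_mem ⟨f, η, hη, rfl⟩)

theorem exists_mem_near_of_mem_closure {p : ℝ≥0∞} {B : Set ((ℕ → Ω → ℝ) × (ℕ → Ω → ℝ))}
    {S γ : ℕ → Ω → ℝ}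
    (hcl : (S, γ) ∈ @closure _ (@instTopologicalSpaceProd _ _ (weakTopProc P p) (probTopProc P)) B)
    {g : Ω → ℝ} (hg : MemLp g p P) (t n : ℕ) {ε η : ℝ} (hε : 0 < ε) (hη : 0 < η) :
    ∃ S' γ', (S', γ') ∈ B ∧ |∫ ω, S' t ω * g ω ∂P - ∫ ω, S t ω * g ω ∂P| < ε ∧
      ∀ k ≤ n, rhoDist P (γ k) (γ' k) < η := by
  let U := (fun S' : ℕ → Ω → ℝ => ∫ ω, S' t ω * g ω ∂P) ⁻¹' Metric.ball (∫ ω, S t ω * g ω ∂P) ε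
  let V := ⋂ k ∈ Iic n, {γ' : ℕ → Ω → ℝ | rhoDist P (γ k) (γ' k) < η}
  have hU : IsOpen[weakTopProc P p] U :=
    @Continuous.isOpen_preimage _ _ (weakTopProc P p) _ _
      (continuous_integral_mul_weakTopProc hg t) _ Metric.isOpen_ball
  have hV : IsOpen[probTopProc P] V :=
    @Set.Finite.isOpen_biInter _ _ (probTopProc P) _ _ (finite_Iic n)
      fun k _ => isOpen_rhoDist_lt (γ k) hη k
  have hmem : (S, γ) ∈ U ×ˢ V :=
    ⟨Metric.mem_ball_self hε, mem_iInter₂.2 fun k _ => by simp [rhoDist_self, hη]⟩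
  obtain ⟨⟨S', γ'⟩, ⟨hU', hV'⟩, hB⟩ :=
    (@mem_closure_iff _ (@instTopologicalSpaceProd _ _ (weakTopProc P p) (probTopProc P)) _ _).1
      hcl _ (@IsOpen.prod _ _ (weakTopProc P p) (probTopProc P) _ _ hU hV) hmem
  exact ⟨S', γ', hB, hU', fun k hk => mem_iInter₂.1 hV' k hk⟩

theorem mul_measureReal_le_abs_sub_le_rhoDist [IsFiniteMeasure P] {f g : Ω → ℝ} (hf : Measurable f)
    (hg : Measurable g) {c : ℝ} (hc : 0 < c) :
    c / (1 + c) * P.real {ω | c ≤ |f ω - g ω|} ≤ rhoDist P f g := by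
  have hdist : Measurable fun ω => |f ω - g ω| := (hf.sub hg).abs
  have hφ : Integrable (fun ω => |f ω - g ω| / (1 + |f ω - g ω|)) P := by
    refine .of_bound (hdist.div (measurable_const.add hdist)).aestronglyMeasurable 1
      (ae_of_all _ fun ω => ?_)
    rw [Real.norm_of_nonneg (by positivity)]
    exact div_le_one_of_le₀ (by linarith) (by positivity)
  have hsub : {ω | c ≤ |f ω - g ω|} ⊆ {ω | c / (1 + c) ≤ |f ω - g ω| / (1 + |f ω - g ω|)} :=
    fun ω (hω : c ≤ _) => by
      rw [mem_ofPred_eq, div_le_div_iff₀ (by positivity) (by positivity)]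
      nlinarith
  calc c / (1 + c) * P.real {ω | c ≤ |f ω - g ω|}
      ≤ c / (1 + c) * P.real {ω | c / (1 + c) ≤ |f ω - g ω| / (1 + |f ω - g ω|)} := by
        gcongr
        exact measure_ne_top P _
    _ ≤ rhoDist P f g :=
        mul_meas_ge_le_integral_of_nonneg (ae_of_all _ fun ω => by positivity) hφ _

theorem measurable_dGamma {T t : ℕ} {γ : ℕ → Ω → ℝ} (hγ : ∀ k, Measurable (γ k)) :
    Measurable (dGamma T γ t) := by
  have hext (s : ℤ) : Measurable (extStrat T γ s) := by
    unfold extStrat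
    split_ifs
    exacts [hγ _, measurable_const]
  exact (hext _).sub (hext _)

omit [MeasurableSpace Ω] in
theorem abs_extStrat_sub_le (T : ℕ) (γ γ' : ℕ → Ω → ℝ) (s : ℤ) (ω : Ω) :
    |extStrat T γ s ω - extStrat T γ' s ω| ≤ |γ s.toNat ω - γ' s.toNat ω| := by
  unfold extStrat
  split_ifs <;> simp

omit [MeasurableSpace Ω] in
theorem abs_dGamma_sub_le (T t : ℕ) (γ γ' : ℕ → Ω → ℝ) (ω : Ω) :
    |dGamma T γ t ω - dGamma T γ' t ω| ≤ |γ t ω - γ' t ω| + |γ (t - 1) ω - γ' (t - 1) ω| := by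
  have hnow := abs_le.1 (abs_extStrat_sub_le T γ γ' t ω)
  have hprev := abs_le.1 (abs_extStrat_sub_le T γ γ' (t - 1) ω)
  rw [Int.toNat_natCast] at hnow
  rw [show ((t : ℤ) - 1).toNat = t - 1 by omega] at hprev
  unfold dGamma
  exact abs_le.2 ⟨by linarith, by linarith⟩

theorem exists_pos_measureReal_abs_dGamma_sub_lt [IsFiniteMeasure P] (T t : ℕ)
    {γ : ℕ → Ω → ℝ} (hγ : ∀ k, Measurable (γ k)) {δ κ : ℝ} (hδ : 0 < δ) (hκ : 0 < κ) :
    ∃ η > 0, ∀ γ' : ℕ → Ω → ℝ, (∀ k, Measurable (γ' k)) → (∀ k ≤ t, rhoDist P (γ k) (γ' k) < η) →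
      P.real {ω | δ ≤ |dGamma T γ t ω - dGamma T γ' t ω|} < κ := by
  have hc : 0 < δ / 2 := half_pos hδ
  refine ⟨δ / 2 / (1 + δ / 2) * (κ / 2), by positivity, fun γ' hγ' hclose => ?_⟩
  have hmarkov (k : ℕ) (hk : k ≤ t) : P.real {ω | δ / 2 ≤ |γ k ω - γ' k ω|} < κ / 2 :=
    lt_of_mul_lt_mul_left
      ((mul_measureReal_le_abs_sub_le_rhoDist (hγ k) (hγ' k) hc).trans_lt (hclose k hk))
      (by positivity)
  have hsub : {ω | δ ≤ |dGamma T γ t ω - dGamma T γ' t ω|} ⊆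
      {ω | δ / 2 ≤ |γ t ω - γ' t ω|} ∪ {ω | δ / 2 ≤ |γ (t - 1) ω - γ' (t - 1) ω|} := by
    intro ω (hω : δ ≤ _)
    by_contra hn
    simp only [mem_union, mem_ofPred_eq, not_or, not_le] at hn
    linarith [abs_dGamma_sub_le T t γ γ' ω]
  calc P.real {ω | δ ≤ |dGamma T γ t ω - dGamma T γ' t ω|}
      ≤ P.real {ω | δ / 2 ≤ |γ t ω - γ' t ω|} +
        P.real {ω | δ / 2 ≤ |γ (t - 1) ω - γ' (t - 1) ω|} :=
        (measureReal_mono hsub).trans (measureReal_union_le _ _)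
    _ < κ / 2 + κ / 2 := add_lt_add (hmarkov t le_rfl) (hmarkov (t - 1) (Nat.sub_le t 1))
    _ = κ := add_halves κ

/-- The graph `B` of `B̂` over `𝒴`. -/
def bidAskGraph (P : Measure Ω) (F : ℕ → MeasurableSpace Ω) (Sl Su : ℕ → Ω → ℝ) (T : ℕ)
    (𝒴 : Set (ℕ → Ω → ℝ)) : Set ((ℕ → Ω → ℝ) × (ℕ → Ω → ℝ)) :=
  {Sγ' : (ℕ → Ω → ℝ) × (ℕ → Ω → ℝ) |
    Sγ'.1 ∈ priceInterval F P Sl Su ∧ Sγ'.2 ∈ 𝒴 ∧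
    ∀ t ≤ T, ∀ᵐ ω ∂P,
      (dGamma T Sγ'.2 t ω < 0 → Sγ'.1 t ω = Sl t ω) ∧
      (0 < dGamma T Sγ'.2 t ω → Sγ'.1 t ω = Su t ω)}

section PriceInterval

variable {F : ℕ → MeasurableSpace Ω} {Sl Su S : ℕ → Ω → ℝ}

theorem integrable_of_mem_priceInterval (hF : ∀ t, F t ≤ ‹MeasurableSpace Ω›)
    (hS : S ∈ priceInterval F P Sl Su) {t : ℕ} (hSl : Integrable (Sl t) P)
    (hSu : Integrable (Su t) P) : Integrable (S t) P :=
  integrable_of_le_of_le ((hS t).1.mono (hF t) le_rfl).aestronglyMeasurable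
    ((hS t).2.mono fun _ h => h.1) ((hS t).2.mono fun _ h => h.2) hSl hSu

theorem abs_sub_le_of_mem_priceInterval (hS : S ∈ priceInterval F P Sl Su) (t : ℕ) :
    ∀ᵐ ω ∂P, |S t ω - Sl t ω| ≤ Su t ω - Sl t ω ∧ |S t ω - Su t ω| ≤ Su t ω - Sl t ω :=
  (hS t).2.mono fun _ h => ⟨abs_le.2 ⟨by linarith, by linarith⟩,
    abs_le.2 ⟨by linarith, by linarith⟩⟩

theorem exists_approx_of_mem_closure_bidAskGraph [IsFiniteMeasure P] {p : ℝ≥0∞} {T : ℕ}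
    {𝒴 : Set (ℕ → Ω → ℝ)} (h𝒴 : ∀ γ ∈ 𝒴, ∀ k, Measurable (γ k)) {γ : ℕ → Ω → ℝ}
    (hcl : (S, γ) ∈ @closure _ (@instTopologicalSpaceProd _ _ (weakTopProc P p) (probTopProc P))
      (bidAskGraph P F Sl Su T 𝒴))
    (hγ : ∀ k, Measurable (γ k)) {t : ℕ} (ht : t ≤ T) {A : Set Ω} (hA : MeasurableSet A)
    {ε δ κ : ℝ} (hε : 0 < ε) (hδ : 0 < δ) (hκ : 0 < κ) :
    ∃ S' ∈ priceInterval F P Sl Su, ∃ E, MeasurableSet E ∧ P.real E < κ ∧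
      |∫ ω in A, S' t ω ∂P - ∫ ω in A, S t ω ∂P| < ε ∧
      ∀ᵐ ω ∂P, ω ∉ E → (δ ≤ -dGamma T γ t ω → S' t ω = Sl t ω) ∧
        (δ ≤ dGamma T γ t ω → S' t ω = Su t ω) := by
  obtain ⟨η, hη, hcont⟩ := exists_pos_measureReal_abs_dGamma_sub_lt (P := P) T t hγ hδ hκ
  obtain ⟨S', γ', ⟨hS', hγ', hB⟩, hint, hρ⟩ :=
    exists_mem_near_of_mem_closure hcl ((memLp_const (1 : ℝ)).indicator hA) t t hε hη
  refine ⟨S', hS', _, ?_, hcont γ' (h𝒴 γ' hγ') hρ, ?_, ?_⟩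
  · exact ((measurable_dGamma hγ).sub (measurable_dGamma (h𝒴 γ' hγ'))).abs measurableSet_Ici
  · simpa [← indicator_mul_right, integral_indicator hA] using hint
  · filter_upwards [hB t ht] with ω hω hωE
    obtain ⟨h₁, h₂⟩ := abs_sub_lt_iff.1 (not_le.1 hωE)
    exact ⟨fun h => hω.1 (by linarith), fun h => hω.2 (by linarith)⟩

theorem ae_eq_of_mem_closure_bidAskGraph [IsFiniteMeasure P] {p : ℝ≥0∞} {T : ℕ}
    (hF : ∀ t, F t ≤ ‹MeasurableSpace Ω›) {𝒴 : Set (ℕ → Ω → ℝ)}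
    (h𝒴 : ∀ γ ∈ 𝒴, ∀ k, Measurable (γ k)) {γ : ℕ → Ω → ℝ}
    (hcl : (S, γ) ∈ @closure _ (@instTopologicalSpaceProd _ _ (weakTopProc P p) (probTopProc P))
      (bidAskGraph P F Sl Su T 𝒴))
    (hS : S ∈ priceInterval F P Sl Su) (hγ : ∀ k, Measurable (γ k)) {t : ℕ} (ht : t ≤ T)
    (hSl : Integrable (Sl t) P) (hSu : Integrable (Su t) P) :
    ∀ᵐ ω ∂P, (dGamma T γ t ω < 0 → S t ω = Sl t ω) ∧ (0 < dGamma T γ t ω → S t ω = Su t ω) := by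
  have hSt := integrable_of_mem_priceInterval hF hS hSl hSu
  have hΔ : Measurable (dGamma T γ t) := measurable_dGamma hγ
  have hbid : ∀ᵐ ω ∂P, 0 < -dGamma T γ t ω → S t ω = Sl t ω := by
    refine ae_eq_of_pos_of_forall_approx hΔ.neg hSt hSl (hSu.sub hSl)
      fun A hA ε hε δ hδ κ hκ => ?_
    obtain ⟨S', hS', E, hE, hEκ, hclose, hoff⟩ :=
      exists_approx_of_mem_closure_bidAskGraph h𝒴 hcl hγ ht hA hε hδ hκ
    exact ⟨S' t, E, hE, hEκ, integrable_of_mem_priceInterval hF hS' hSl hSu,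
      (abs_sub_le_of_mem_priceInterval hS' t).mono fun _ h => h.1,
      hoff.mono fun _ h hωE => (h hωE).1, hclose⟩
  have hask : ∀ᵐ ω ∂P, 0 < dGamma T γ t ω → S t ω = Su t ω := by
    refine ae_eq_of_pos_of_forall_approx hΔ hSt hSu (hSu.sub hSl)
      fun A hA ε hε δ hδ κ hκ => ?_
    obtain ⟨S', hS', E, hE, hEκ, hclose, hoff⟩ :=
      exists_approx_of_mem_closure_bidAskGraph h𝒴 hcl hγ ht hA hε hδ hκ
    exact ⟨S' t, E, hE, hEκ, integrable_of_mem_priceInterval hF hS' hSl hSu,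
      (abs_sub_le_of_mem_priceInterval hS' t).mono fun _ h => h.2,
      hoff.mono fun _ h hωE => (h hωE).2, hclose⟩
  filter_upwards [hbid, hask] with ω hbid hask
  exact ⟨fun h => hbid (neg_pos.2 h), hask⟩

end PriceInterval

end Shadow

theorem statement9_general
    {Ω : Type*} [MeasurableSpace Ω] (P : Measure Ω) [IsProbabilityMeasure P]
    (T : ℕ) (F : ℕ → MeasurableSpace Ω)
    (hF_le : ∀ t, F t ≤ ‹MeasurableSpace Ω›)
    (q p : ℝ≥0∞) (hq : 1 ≤ q)
    (Sl Su : ℕ → Ω → ℝ)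
    (hSl_Lq : ∀ t, MemLp (Sl t) q P) (hSu_Lq : ∀ t, MemLp (Su t) q P)
    (s : ℝ≥0∞)
    (𝒴 : Set (ℕ → Ω → ℝ))
    (h𝒴ad : ∀ γ ∈ 𝒴, ∀ t, Measurable[F t] (γ t) ∧ MemLp (γ t) s P) :
    ∀ Sγ : (ℕ → Ω → ℝ) × (ℕ → Ω → ℝ),
      Sγ ∈ @closure _ (@instTopologicalSpaceProd _ _ (weakTopProc P p) (probTopProc P))
        {Sγ' : (ℕ → Ω → ℝ) × (ℕ → Ω → ℝ) |
          Sγ'.1 ∈ priceInterval F P Sl Su ∧ Sγ'.2 ∈ 𝒴 ∧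
          ∀ t ≤ T, ∀ᵐ ω ∂P,
            (dGamma T Sγ'.2 t ω < 0 → Sγ'.1 t ω = Sl t ω) ∧
            (0 < dGamma T Sγ'.2 t ω → Sγ'.1 t ω = Su t ω)} →
      Sγ.1 ∈ priceInterval F P Sl Su → Sγ.2 ∈ 𝒴 →
      ∀ t ≤ T, ∀ᵐ ω ∂P,
        (dGamma T Sγ.2 t ω < 0 → Sγ.1 t ω = Sl t ω) ∧
        (0 < dGamma T Sγ.2 t ω → Sγ.1 t ω = Su t ω) := by
  rintro ⟨S, γ⟩ hcl hS hγ t ht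
  have h𝒴 : ∀ γ ∈ 𝒴, ∀ k, Measurable (γ k) := fun γ hγ k =>
    (h𝒴ad γ hγ k).1.mono (hF_le k) le_rfl
  exact ae_eq_of_mem_closure_bidAskGraph hF_le h𝒴 hcl hS (h𝒴 γ hγ) ht
    ((hSl_Lq t).integrable hq) ((hSu_Lq t).integrable hq)

/-- The graph `B` of the set-valued map
`B̂(γ) = ∏_t ({S̲_t}·1_{Δγ_t<0} + {S̄_t}·1_{Δγ_t>0} + [S̲_t,S̄_t]·1_{Δγ_t=0})`
is closed in `[S̲, S̄] × 𝒴` with respect to the product of the weak topology `τ^w` and the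
topology `τ` of convergence in probability. -/
theorem statement9
    {Ω : Type*} [MeasurableSpace Ω] (P : Measure Ω) [IsProbabilityMeasure P]
    (T : ℕ) (F : ℕ → MeasurableSpace Ω)
    (hF_mono : Monotone F) (hF_le : ∀ t, F t ≤ ‹MeasurableSpace Ω›)
    (q p : ℝ≥0∞) (hq : 1 ≤ q) (hpq : 1 / p + 1 / q = 1)
    (Sl Su : ℕ → Ω → ℝ)
    (hSl_meas : ∀ t, Measurable[F t] (Sl t)) (hSu_meas : ∀ t, Measurable[F t] (Su t))
    (hS_ord : ∀ t, ∀ᵐ ω ∂P, 0 < Sl t ω ∧ Sl t ω ≤ Su t ω)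
    (hSl_Lq : ∀ t, MemLp (Sl t) q P) (hSu_Lq : ∀ t, MemLp (Su t) q P)
    (s : ℝ≥0∞) (hs : s = 0 ∨ s = ∞)
    (𝒴 : Set (ℕ → Ω → ℝ)) (h𝒴conv : Convex ℝ 𝒴)
    (h𝒴ad : ∀ γ ∈ 𝒴, ∀ t, Measurable[F t] (γ t) ∧ MemLp (γ t) s P) :
    ∀ Sγ : (ℕ → Ω → ℝ) × (ℕ → Ω → ℝ),
      Sγ ∈ @closure _ (@instTopologicalSpaceProd _ _ (weakTopProc P p) (probTopProc P))
        {Sγ' : (ℕ → Ω → ℝ) × (ℕ → Ω → ℝ) |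
          Sγ'.1 ∈ priceInterval F P Sl Su ∧ Sγ'.2 ∈ 𝒴 ∧
          ∀ t ≤ T, ∀ᵐ ω ∂P,
            (dGamma T Sγ'.2 t ω < 0 → Sγ'.1 t ω = Sl t ω) ∧
            (0 < dGamma T Sγ'.2 t ω → Sγ'.1 t ω = Su t ω)} →
      Sγ.1 ∈ priceInterval F P Sl Su → Sγ.2 ∈ 𝒴 →
      ∀ t ≤ T, ∀ᵐ ω ∂P,
        (dGamma T Sγ.2 t ω < 0 → Sγ.1 t ω = Sl t ω) ∧
        (0 < dGamma T Sγ.2 t ω → Sγ.1 t ω = Su t ω) :=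
  statement9_general P T F hF_le q p hq Sl Su hSl_Lq hSu_Lq s 𝒴 h𝒴ad
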